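/- Let M be a pairwise compatible finite family of 3-state characters on a finite set of taxa X, and let c be a character of M with two distinct dependent states i and j. Let a be a witness that state i of c is dependent and let b be a witness that state j of c is dependent. Then the subfamily {a, b, c} has no perfect phylogeny (i.e., {a, b, c} is an obstruction set for M). -/

import Mathlib

/-- A perfect phylogeny for a family of `k`-state characters `chars` (indexed by `F`)
on a finite set of taxa `X`: a finite tree `T` with a labeling `ℓ` of its vertices by
full state-assignments, such that every taxon's state-assignment occurs at some vertex,
and for each character and state the vertices carrying that state induce a connected
subgraph of `T`. -/
def PerfectPhylogeny {X F : Type} [Fintype X] [Fintype F] (k : ℕ)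
    (chars : F → X → Fin k) : Prop :=
  ∃ (V : Type) (_ : Fintype V) (T : SimpleGraph V) (ℓ : V → F → Fin k),
    T.IsTree ∧
    (∀ x : X, ∃ v : V, ∀ f : F, ℓ v f = chars f x) ∧
    ∀ (f : F) (s : Fin k), (T.induce {v : V | ℓ v f = s}).Preconnected

/-- Two characters `a, b` have a perfect phylogeny (as a two-member family). -/
def PairPP {X : Type} [Fintype X] (k : ℕ) (a b : X → Fin k) : Prop :=
  PerfectPhylogeny k ![a, b]

/-- The subfamily of `chars` indexed by the finite set `S` has a perfect phylogeny. -/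
def SubPP {X F : Type} [Fintype X] [Fintype F] (k : ℕ) (chars : F → X → Fin k)
    (S : Finset F) : Prop :=
  PerfectPhylogeny k (fun f : {x // x ∈ S} => chars f.1)

/-- A family of characters is pairwise compatible if every two of its characters
have a perfect phylogeny. -/
def PairwiseCompatible {X F : Type} [Fintype X] [Fintype F] (k : ℕ)
    (chars : F → X → Fin k) : Prop :=
  ∀ a b : F, a ≠ b → PairPP k (chars a) (chars b)

/-- The partition intersection graph of two characters `a, b`.  The vertex `(false, i)`
represents state `i` of `a` and `(true, j)` represents state `j` of `b`; there is an
edge between `(false, i)` and `(true, j)` exactly when some taxon has state `i` for `a`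
and state `j` for `b`, and no edges between vertices of the same character. -/
def pig {X : Type} {k : ℕ} (a b : X → Fin k) : SimpleGraph (Bool × Fin k) where
  Adj u v :=
    (u.1 = false ∧ v.1 = true ∧ ∃ x, a x = u.2 ∧ b x = v.2) ∨
    (u.1 = true ∧ v.1 = false ∧ ∃ x, a x = v.2 ∧ b x = u.2)
  symm := by
    constructor
    rintro ⟨ub, us⟩ ⟨vb, vs⟩ (⟨h1, h2, x, hx⟩ | ⟨h1, h2, x, hx⟩) <;>
      subst h1 <;> subst h2
    · exact Or.inr ⟨rfl, rfl, x, hx⟩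
    · exact Or.inl ⟨rfl, rfl, x, hx⟩
  loopless := by
    constructor
    rintro ⟨ub, us⟩ (⟨h1, h2, -⟩ | ⟨h1, h2, -⟩) <;> simp_all

/-- The binarized character `c(i)` of a 3-state character `c`: state `0` on taxa
where `c` has state `i`, and state `1` elsewhere. -/
def bin {X : Type} (c : X → Fin 3) (i : Fin 3) : X → Fin 2 :=
  fun x => if c x = i then 0 else 1

/-- State `i` of character `c` (of the family `chars`) is dependent: some character `d`
has two distinct states `j, k` such that `c(i)` is incompatible with both `d(j)` and `d(k)`. -/
def DependentState {X F : Type} [Fintype X] [Fintype F] [DecidableEq F] (chars : F → X → Fin 3)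
    (c : F) (i : Fin 3) : Prop :=
  ∃ (d : F) (j k : Fin 3), j ≠ k ∧
    ¬ PairPP 2 (bin (chars c) i) (bin (chars d) j) ∧
    ¬ PairPP 2 (bin (chars c) i) (bin (chars d) k)

/-- `d` is a witness that state `i` of `c` is dependent. -/
def WitnessOf {X F : Type} [Fintype X] [Fintype F] [DecidableEq F] (chars : F → X → Fin 3)
    (c : F) (i : Fin 3) (d : F) : Prop :=
  ∃ j k : Fin 3, j ≠ k ∧
    ¬ PairPP 2 (bin (chars c) i) (bin (chars d) j) ∧
    ¬ PairPP 2 (bin (chars c) i) (bin (chars d) k)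

/-- The graph `G` contains a path of length four (five pairwise distinct vertices,
four edges) whose middle vertex is `m`. -/
def HasPathLen4Mid {V : Type} (G : SimpleGraph V) (m : V) : Prop :=
  ∃ p : Fin 5 → V, Function.Injective p ∧
    (∀ t : Fin 4, G.Adj (p t.castSucc) (p t.succ)) ∧ p 2 = m

/-- Some taxon realizes the pair of states `(i, j)` for the pair of characters `(u, v)`. -/
def realizes {X : Type} (u v : X → Fin 3) (i j : Fin 3) : Prop :=
  ∃ t, u t = i ∧ v t = j


/-!
In a perfect phylogeny the vertices carrying a fixed state of a character form a subtree, so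
contracting these subtrees turns the tree into a graph on the states which is again
tree-like: it has no triangle, and two states are joined by at most one edge of the tree.

If `c(i)` is incompatible with `d(s)`, the four-gamete condition puts taxa with state `s` of
`d` both inside and outside state `i` of `c`, so the subtree of state `s` of `d` leaves the
subtree of state `i` of `c` through some edge. A witness provides two states `s ≠ t` of `d`;
the two exit edges differ, hence lead to different states of `c`, and state `i` of `c` is
adjacent to both other states. The same holds for `j`, so the three states of `c` form a
triangle.
-/

open SimpleGraph

instance SimpleGraph.pathGraph.decidableAdj (n : ℕ) : DecidableRel (pathGraph n).Adj :=
  fun _ _ => decidable_of_iff' _ pathGraph_adj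

lemma SimpleGraph.pathGraph_three_isTree : (pathGraph 3).IsTree := by
  rw [isTree_iff_connected_and_card, Nat.card_eq_fintype_card, ← edgeFinset_card, Nat.card_fin]
  exact ⟨pathGraph_connected 2, by decide⟩

lemma SimpleGraph.preconnected_induce_of_isClique {V : Type*} {G : SimpleGraph V} {s : Set V}
    (h : G.IsClique s) : (G.induce s).Preconnected := by
  rw [induce_eq_top.2 h]
  exact preconnected_top

section LabelGraph

variable {V α β : Type*} {T : SimpleGraph V} {L : V → α}

def FibresPreconnected (T : SimpleGraph V) (L : V → α) : Prop :=
  ∀ s, (T.induce {v | L v = s}).Preconnected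

/-- The graph on labels obtained from `T` by contracting every fibre of `L`. -/
def labelGraph (T : SimpleGraph V) (L : V → α) : SimpleGraph α :=
  fromRel fun p q => ∃ x y, T.Adj x y ∧ L x = p ∧ L y = q

lemma labelGraph_adj {p q : α} :
    (labelGraph T L).Adj p q ↔ p ≠ q ∧ ∃ x y, T.Adj x y ∧ L x = p ∧ L y = q := by
  rw [labelGraph, fromRel_adj]
  refine and_congr_right fun _ => ⟨?_, Or.inl⟩
  rintro (h | ⟨x, y, hxy, hx, hy⟩)
  · exact h
  · exact ⟨y, x, hxy.symm, hy, hx⟩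

lemma SimpleGraph.deleteEdges_adj_of_label_ne {x y u v : V} (huv : T.Adj u v) (hx : L v ≠ L x)
    (hy : L v ≠ L y) : (T.deleteEdges {s(x, y)}).Adj u v := by
  refine (deleteEdges_adj).2 ⟨huv, fun h => ?_⟩
  rcases Sym2.eq_iff.1 (Set.mem_singleton_iff.1 h) with ⟨-, rfl⟩ | ⟨-, rfl⟩
  exacts [hy rfl, hx rfl]

lemma SimpleGraph.IsTree.not_reachable_deleteEdges {x y : V} (hT : T.IsTree) (hxy : T.Adj x y) :
    ¬(T.deleteEdges {s(x, y)}).Reachable x y :=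
  isBridge_iff.1 (isAcyclic_iff_forall_adj_isBridge.1 hT.isAcyclic hxy)

namespace FibresPreconnected

lemma reachable_deleteEdges (hL : FibresPreconnected T L) {x y u v : V} (hxy : L x ≠ L y)
    (huv : L u = L v) : (T.deleteEdges {s(x, y)}).Reachable u v := by
  refine (hL (L v) ⟨u, huv⟩ ⟨v, rfl⟩).map ⟨Subtype.val, fun {w w'} hww' => ?_⟩
  refine (deleteEdges_adj).2 ⟨hww', fun h => hxy ?_⟩
  have hw : L w = L v := w.2
  have hw' : L w' = L v := w'.2
  rcases Sym2.eq_iff.1 (Set.mem_singleton_iff.1 h) with ⟨rfl, rfl⟩ | ⟨rfl, rfl⟩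
  exacts [hw.trans hw'.symm, hw'.trans hw.symm]

lemma exists_adj_mem_not_mem (hL : FibresPreconnected T L) (P : Set V) {u w : V}
    (huw : L u = L w) (hu : u ∈ P) (hw : w ∉ P) :
    ∃ x y, T.Adj x y ∧ L x = L u ∧ L y = L u ∧ x ∈ P ∧ y ∉ P := by
  obtain ⟨p⟩ := hL (L u) ⟨u, rfl⟩ ⟨w, huw.symm⟩
  obtain ⟨d, -, hd, hd'⟩ := p.exists_boundary_dart (Subtype.val ⁻¹' P) hu hw
  exact ⟨d.fst, d.snd, d.adj, d.fst.2, d.snd.2, hd, hd'⟩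

/-- In a tree, two fibres of `L` are joined by at most one edge. -/
lemma eq_of_adj_of_adj (hT : T.IsTree) (hL : FibresPreconnected T L) {x y x' y' : V}
    (hxy : T.Adj x y) (hx'y' : T.Adj x' y') (hx : L x' = L x) (hy : L y' = L y)
    (hne : L x ≠ L y) : x' = x := by
  by_contra hx'x
  apply hT.not_reachable_deleteEdges hxy
  have hx'y'_del : (T.deleteEdges {s(x, y)}).Adj x' y' := by
    refine (deleteEdges_adj).2 ⟨hx'y', fun h => ?_⟩
    rcases Sym2.eq_iff.1 (Set.mem_singleton_iff.1 h) with ⟨rfl, -⟩ | ⟨rfl, -⟩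
    exacts [hx'x rfl, hne hx.symm]
  exact (hL.reachable_deleteEdges hne hx.symm).trans
    (hx'y'_del.reachable.trans (hL.reachable_deleteEdges hne hy))

lemma labelGraph_cliqueFree_three (hT : T.IsTree) (hL : FibresPreconnected T L) :
    (labelGraph T L).CliqueFree 3 := by
  classical
  intro s hs
  obtain ⟨p, q, r, hpq, hpr, hqr, rfl⟩ := is3Clique_iff.1 hs
  obtain ⟨hpq, x, y, hxy, rfl, rfl⟩ := labelGraph_adj.1 hpq
  obtain ⟨hpr, x', z, hx'z, hx', rfl⟩ := labelGraph_adj.1 hpr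
  obtain ⟨hqr, y', z', hy'z', hy', hz'⟩ := labelGraph_adj.1 hqr
  -- the walk `x ~ x' — z ~ z' — y' ~ y` avoids the edge `x y`
  apply hT.not_reachable_deleteEdges hxy
  have hx'z_del := deleteEdges_adj_of_label_ne (x := x) (y := y) hx'z hpr.symm hqr.symm
  have hz'y'_del := deleteEdges_adj_of_label_ne (x := x) (y := y) hy'z'
    (hz' ▸ hpr.symm) (hz' ▸ hqr.symm)
  exact (hL.reachable_deleteEdges hpq hx'.symm).trans <| hx'z_del.reachable.trans <|
    (hL.reachable_deleteEdges hpq hz'.symm).trans <| hz'y'_del.symm.reachable.trans <|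
    hL.reachable_deleteEdges hpq hy'

lemma exists_labelGraph_adj_ne {Lc : V → α} {Ld : V → β} (hT : T.IsTree)
    (hc : FibresPreconnected T Lc) (hd : FibresPreconnected T Ld) {i : α} {s t : β}
    (hst : s ≠ t) (hs : (∃ v, Lc v = i ∧ Ld v = s) ∧ ∃ v, Lc v ≠ i ∧ Ld v = s)
    (ht : (∃ v, Lc v = i ∧ Ld v = t) ∧ ∃ v, Lc v ≠ i ∧ Ld v = t) :
    ∃ p q, p ≠ q ∧ (labelGraph T Lc).Adj i p ∧ (labelGraph T Lc).Adj i q := by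
  obtain ⟨⟨u, hui, hus⟩, w, hwi, hws⟩ := hs
  obtain ⟨⟨u', hu'i, hu't⟩, w', hw'i, hw't⟩ := ht
  obtain ⟨x, y, hxy, hxs, -, hxi, hyi⟩ :=
    hd.exists_adj_mem_not_mem {v | Lc v = i} (hus.trans hws.symm) hui hwi
  obtain ⟨x', y', hx'y', hx't, -, hx'i, hy'i⟩ :=
    hd.exists_adj_mem_not_mem {v | Lc v = i} (hu't.trans hw't.symm) hu'i hw'i
  refine ⟨Lc y, Lc y', fun hyy' => hst ?_, labelGraph_adj.2 ⟨fun h => hyi h.symm, x, y, hxy,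
    hxi, rfl⟩, labelGraph_adj.2 ⟨fun h => hy'i h.symm, x', y', hx'y', hx'i, rfl⟩⟩
  have hx'x := hc.eq_of_adj_of_adj hT hxy hx'y' (hx'i.trans hxi.symm) hyy'.symm
    (fun h => hyi (h.symm.trans hxi))
  rw [← hus, ← hxs, ← hx'x, hx't, hu't]

end FibresPreconnected

end LabelGraph

lemma bin_eq_zero_iff {X : Type} {c : X → Fin 3} {i : Fin 3} {x : X} :
    bin c i x = 0 ↔ c x = i := by
  unfold bin; split_ifs <;> simp_all

lemma bin_eq_one_iff {X : Type} {c : X → Fin 3} {i : Fin 3} {x : X} :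
    bin c i x = 1 ↔ c x ≠ i := by
  unfold bin; split_ifs <;> simp_all

/-- The easy half of the four-gamete condition: two binary characters that miss one of the
four state pairs are compatible, on the path `(s, t+1) — (s+1, t+1) — (s+1, t)`. -/
lemma pairPP_two_of_forall_not {X : Type} [Fintype X] (u v : X → Fin 2) (s t : Fin 2)
    (h : ∀ x, ¬(u x = s ∧ v x = t)) : PairPP 2 u v := by
  let ℓ : Fin 3 → Fin 2 → Fin 2 := fun w =>
    ![if w = 0 then s else s + 1, if w = 2 then t else t + 1]
  have hflip : ∀ z w : Fin 2, z ≠ w → z = w + 1 := by decide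
  refine ⟨Fin 3, inferInstance, pathGraph 3, ℓ, pathGraph_three_isTree, fun x => ?_,
    fun f r => ?_⟩
  · by_cases hu : u x = s
    · have hv := hflip _ _ fun hv => h x ⟨hu, hv⟩
      exact ⟨0, fun f => by fin_cases f <;> simp [ℓ, hu, hv]⟩
    by_cases hv : v x = t
    · exact ⟨2, fun f => by fin_cases f <;> simp [ℓ, hv, hflip _ _ hu]⟩
    · exact ⟨1, fun f => by fin_cases f <;> simp [ℓ, hflip _ _ hu, hflip _ _ hv]⟩
  -- the only non-adjacent pair of vertices is `{0, 2}`, and `ℓ 0`, `ℓ 2` differ everywhere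
  have hfar : ∀ f, ℓ 0 f ≠ ℓ 2 f := by intro f; fin_cases f <;> simp [ℓ]
  refine preconnected_induce_of_isClique fun w hw w' hw' hww' => ?_
  have hadj : ∀ w w' : Fin 3, w ≠ w' → ¬(w = 0 ∧ w' = 2) → ¬(w = 2 ∧ w' = 0) →
      (pathGraph 3).Adj w w' := by decide
  refine hadj w w' hww' ?_ ?_ <;> rintro ⟨rfl, rfl⟩
  exacts [hfar f (hw.trans hw'.symm), hfar f (hw'.trans hw.symm)]

lemma exists_of_not_pairPP_bin {X : Type} [Fintype X] {c d : X → Fin 3} {i s : Fin 3}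
    (h : ¬PairPP 2 (bin c i) (bin d s)) :
    (∃ x, c x = i ∧ d x = s) ∧ ∃ x, c x ≠ i ∧ d x = s := by
  constructor <;> by_contra! hne
  · refine h (pairPP_two_of_forall_not _ _ 0 0 fun x hx => hne x ?_ ?_)
    exacts [bin_eq_zero_iff.1 hx.1, bin_eq_zero_iff.1 hx.2]
  · refine h (pairPP_two_of_forall_not _ _ 1 0 fun x hx => hne x ?_ ?_)
    exacts [bin_eq_one_iff.1 hx.1, bin_eq_zero_iff.1 hx.2]

lemma labelGraph_adj_of_witness {X V : Type} [Fintype X] {T : SimpleGraph V}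
    {c d : X → Fin 3} {Lc Ld : V → Fin 3} (hT : T.IsTree) (hc : FibresPreconnected T Lc)
    (hd : FibresPreconnected T Ld) (hcover : ∀ x, ∃ v, Lc v = c x ∧ Ld v = d x) {i : Fin 3}
    (hw : ∃ s t, s ≠ t ∧ ¬PairPP 2 (bin c i) (bin d s) ∧ ¬PairPP 2 (bin c i) (bin d t))
    {r : Fin 3} (hr : r ≠ i) : (labelGraph T Lc).Adj i r := by
  obtain ⟨s, t, hst, hs, ht⟩ := hw
  have lift : ∀ {P : Fin 3 → Prop} {s : Fin 3}, (∃ x, P (c x) ∧ d x = s) →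
      ∃ v, P (Lc v) ∧ Ld v = s := by
    rintro P s ⟨x, hx, rfl⟩
    obtain ⟨v, hvc, hvd⟩ := hcover x
    exact ⟨v, hvc ▸ hx, hvd⟩
  obtain ⟨hs₁, hs₂⟩ := exists_of_not_pairPP_bin hs
  obtain ⟨ht₁, ht₂⟩ := exists_of_not_pairPP_bin ht
  obtain ⟨p, q, hpq, hp, hq⟩ := hc.exists_labelGraph_adj_ne hT hd hst
    ⟨lift (P := (· = i)) hs₁, lift (P := (· ≠ i)) hs₂⟩
    ⟨lift (P := (· = i)) ht₁, lift (P := (· ≠ i)) ht₂⟩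
  have hpi := hp.ne
  have hqi := hq.ne
  obtain rfl | rfl : r = p ∨ r = q := by omega
  exacts [hp, hq]

theorem witnesses_give_obstruction_set_general
    {X F : Type} [Fintype X] [Fintype F] [DecidableEq F] (chars : F → X → Fin 3)
    (c : F) (i j : Fin 3) (hij : i ≠ j)
    (a b : F) (ha : WitnessOf chars c i a) (hb : WitnessOf chars c j b) :
    ¬ SubPP 3 chars {a, b, c} := by
  rintro ⟨V, _, T, ℓ, hT, htaxa, hconn⟩
  have hcover : ∀ f g : {x // x ∈ ({a, b, c} : Finset F)}, ∀ x,
      ∃ v, ℓ v f = chars f x ∧ ℓ v g = chars g x := fun f g x =>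
    let ⟨v, hv⟩ := htaxa x; ⟨v, hv f, hv g⟩
  let C : {x // x ∈ ({a, b, c} : Finset F)} := ⟨c, by simp⟩
  have hi : ∀ r ≠ i, (labelGraph T (ℓ · C)).Adj i r := fun _ =>
    labelGraph_adj_of_witness hT (hconn C) (hconn ⟨a, by simp⟩) (hcover C _) ha
  have hj : ∀ r ≠ j, (labelGraph T (ℓ · C)).Adj j r := fun _ =>
    labelGraph_adj_of_witness hT (hconn C) (hconn ⟨b, by simp⟩) (hcover C _) hb
  obtain ⟨m, hmi, hmj⟩ : ∃ m : Fin 3, m ≠ i ∧ m ≠ j := by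
    have : ∀ i j : Fin 3, ∃ m, m ≠ i ∧ m ≠ j := by decide
    exact this i j
  exact FibresPreconnected.labelGraph_cliqueFree_three hT (hconn C) {i, j, m}
    (is3Clique_triple_iff.2 ⟨hi j hij.symm, hi m hmi, hj m hmj⟩)

/-- if `a` witnesses dependent state `i` of `c` and `b` witnesses another
dependent state `j` of `c`, then `{a, b, c}` is an obstruction set. -/
theorem witnesses_give_obstruction_set
    {X F : Type} [Fintype X] [Fintype F] [DecidableEq F] (chars : F → X → Fin 3)
    (hpc : PairwiseCompatible 3 chars) (c : F) (i j : Fin 3) (hij : i ≠ j)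
    (a b : F) (ha : WitnessOf chars c i a) (hb : WitnessOf chars c j b) :
    ¬ SubPP 3 chars {a, b, c} :=
  witnesses_give_obstruction_set_general chars c i j hij a b ha hb
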